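/- arXiv:2510.01987 — 2 statements merged into one kernel-verified Lean document; each statement's English description precedes it below -/
import Mathlib

section
/- Let σ > 0, let μ₀, μ₁ be real numbers, and let α ∈ (1, ∞). Then the Rényi divergence of order α between the Gaussian measures N(μ₀, σ²) and N(μ₁, σ²) on ℝ satisfies D_α(N(μ₀, σ²) ‖ N(μ₁, σ²)) = α·(μ₀ − μ₁)²/(2σ²). -/
open MeasureTheory ProbabilityTheory Real
open scoped NNReal ENNReal

/-- The Rényi divergence of order `α` between measures `μ` and `ν`:
`D_α(μ‖ν) = (α − 1)⁻¹ · log ∫ (dμ/dν)^α dν`. -/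
noncomputable def renyiDiv {X : Type*} [MeasurableSpace X] (α : ℝ) (μ ν : Measure X) : ℝ :=
  (α - 1)⁻¹ * Real.log (∫ x, ((μ.rnDeriv ν x).toReal) ^ α ∂ν)

/-- The Rényi divergence of order `α ∈ (1, ∞)` between two real Gaussian measures with
means `μ₀`, `μ₁` and common variance `σ²` equals `α (μ₀ − μ₁)² / (2σ²)`. -/
theorem renyiDiv_gaussianReal (σ : ℝ) (hσ : 0 < σ) (μ₀ μ₁ : ℝ) (α : ℝ) (hα : 1 < α) :
    renyiDiv α (gaussianReal μ₀ ((σ ^ 2).toNNReal)) (gaussianReal μ₁ ((σ ^ 2).toNNReal))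
      = α * (μ₀ - μ₁) ^ 2 / (2 * σ ^ 2) := by
  have hσ2 : (0:ℝ) < σ ^ 2 := by positivity
  set v : ℝ≥0 := (σ ^ 2).toNNReal with hv_def
  have hvv : (v : ℝ) = σ ^ 2 := Real.coe_toNNReal _ hσ2.le
  have hvpos : (0:ℝ) < (v:ℝ) := by rw [hvv]; exact hσ2
  have hv : v ≠ 0 := by
    intro h
    rw [h] at hvpos
    simp at hvpos
  set m : ℝ := α * μ₀ + (1 - α) * μ₁ with hm
  set c : ℝ := α * (α - 1) * (μ₀ - μ₁) ^ 2 / (2 * σ ^ 2) with hc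
  -- identify the Radon–Nikodym derivative
  have h_rn : (gaussianReal μ₀ v).rnDeriv (gaussianReal μ₁ v)
      =ᵐ[(volume : Measure ℝ)]
        fun x => ENNReal.ofReal (gaussianPDFReal μ₀ v x / gaussianPDFReal μ₁ v x) := by
    have h1 : gaussianReal μ₁ v = (volume : Measure ℝ).withDensity (gaussianPDF μ₁ v) :=
      gaussianReal_of_var_ne_zero _ hv
    have h2 := Measure.rnDeriv_withDensity_right (gaussianReal μ₀ v) (volume : Measure ℝ)
      (measurable_gaussianPDF μ₁ v).aemeasurable
      (ae_of_all _ fun x => (gaussianPDF_pos _ hv x).ne')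
      (ae_of_all _ fun _ => ENNReal.ofReal_ne_top)
    rw [← h1] at h2
    filter_upwards [h2, rnDeriv_gaussianReal μ₀ v] with x hx hx0
    rw [hx, hx0]
    simp only [gaussianPDF]
    rw [ENNReal.ofReal_div_of_pos (gaussianPDFReal_pos _ _ _ hv), div_eq_mul_inv, mul_comm]
  -- the pointwise computation
  have key : ∀ x : ℝ, gaussianPDFReal μ₁ v x *
      (gaussianPDFReal μ₀ v x / gaussianPDFReal μ₁ v x) ^ α
      = Real.exp c * gaussianPDFReal m v x := by
    intro x
    have hC : (0:ℝ) < (√(2 * π * σ ^ 2))⁻¹ := by positivity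
    simp only [gaussianPDFReal, hvv]
    rw [mul_div_mul_left _ _ hC.ne', ← Real.exp_sub, ← Real.exp_mul, mul_assoc, ← Real.exp_add]
    have h2 : rexp c * ((√(2 * π * σ ^ 2))⁻¹ * rexp (-(x - m) ^ 2 / (2 * σ ^ 2)))
        = (√(2 * π * σ ^ 2))⁻¹ * rexp (c + -(x - m) ^ 2 / (2 * σ ^ 2)) := by
      rw [Real.exp_add]; ring
    rw [h2]
    congr 1
    rw [Real.exp_eq_exp]
    rw [hc, hm]
    field_simp
    ring
  -- compute the integral
  have h_int : (∫ x, (((gaussianReal μ₀ v).rnDeriv (gaussianReal μ₁ v) x).toReal) ^ α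
      ∂(gaussianReal μ₁ v)) = Real.exp c := by
    have hac : gaussianReal μ₁ v ≪ (volume : Measure ℝ) := by
      rw [gaussianReal_of_var_ne_zero _ hv]
      exact withDensity_absolutelyContinuous _ _
    have h_congr : (fun x => (((gaussianReal μ₀ v).rnDeriv (gaussianReal μ₁ v) x).toReal) ^ α)
        =ᵐ[gaussianReal μ₁ v]
        fun x => (gaussianPDFReal μ₀ v x / gaussianPDFReal μ₁ v x) ^ α := by
      filter_upwards [hac.ae_eq h_rn] with x hx
      rw [hx, ENNReal.toReal_ofReal (div_nonneg (gaussianPDFReal_nonneg _ _ _) (gaussianPDFReal_nonneg _ _ _))]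
    rw [integral_congr_ae h_congr]
    have hrepr : gaussianReal μ₁ v
        = (volume : Measure ℝ).withDensity
            (fun x => ((gaussianPDFReal μ₁ v x).toNNReal : ENNReal)) := by
      rw [gaussianReal_of_var_ne_zero _ hv]; rfl
    rw [hrepr, integral_withDensity_eq_integral_smul
      ((measurable_gaussianPDFReal μ₁ v).real_toNNReal)]
    have hfun : (fun x => (gaussianPDFReal μ₁ v x).toNNReal •
        ((gaussianPDFReal μ₀ v x / gaussianPDFReal μ₁ v x) ^ α))
        = fun x => Real.exp c * gaussianPDFReal m v x := by
      funext x
      rw [NNReal.smul_def, Real.coe_toNNReal _ (gaussianPDFReal_nonneg _ _ _)]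
      exact key x
    rw [hfun, integral_const_mul, integral_gaussianPDFReal_eq_one m hv, mul_one]
  have hα1 : α - 1 ≠ 0 := sub_ne_zero.mpr hα.ne'
  rw [renyiDiv, h_int, Real.log_exp, hc]
  field_simp
end

section
/- Let n ≥ 1, let p : Fin n → ℝ, and let σ be a permutation of Fin n that sorts p in nonincreasing order, i.e., p(σ k) ≥ p(σ k′) whenever k ≤ k′. Let w : Fin n → ℝ satisfy: for every index i with i + 1 < n, w i = 0 if p(σ i) = p(σ (i+1)), and w i > 0 if p(σ i) > p(σ (i+1)). Define g : Fin n → ℝ by g j = Σ_{k ≥ σ⁻¹ j} w k (that is, g = S(p)⁻¹ U w where U is the upper-triangular matrix of ones and S(p) the sorting permutation). Then g is order-preserving for p: for all i, j ∈ Fin n, p i ≥ p j if and only if g i ≥ g j. -/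
open Finset

/-! Put `q = p ∘ σ`, which is antitone, and `T a = ∑_{k ≥ a} w k`, so that `g = T ∘ σ⁻¹`.
For `a ≤ b`, `T a - T b = ∑_{a ≤ k < b} w k` is a sum of nonnegative weights, positive exactly
when `q` strictly drops at some step between `a` and `b`, i.e. exactly when `q b < q a`.
Thus `q` and `T` are antitone with the same strict descents, so they induce the same order. -/

theorem Fin.val_add_one_lt_of_lt {n : ℕ} {k b : Fin n} (h : k < b) : (k : ℕ) + 1 < n :=
  (Nat.succ_le_of_lt h).trans_lt b.isLt

theorem Fin.exists_succ_lt_of_lt {α : Type*} [LinearOrder α] {n : ℕ} {f : Fin n → α}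
    {a b : Fin n} (hab : a ≤ b) (h : f b < f a) :
    ∃ k ∈ Ico a b, ∃ hk : (k : ℕ) + 1 < n, f ⟨k + 1, hk⟩ < f k := by
  by_contra! H
  have key : ∀ m, (a : ℕ) ≤ m → ∀ hm : m < n, m ≤ b → f a ≤ f ⟨m, hm⟩ := by
    intro m ham
    induction m, ham using Nat.le_induction with
    | base => exact fun _ _ ↦ le_rfl
    | succ m ham ih =>
      intro hm hmb
      have hmem : (⟨m, by omega⟩ : Fin n) ∈ Ico a b := by
        simp only [mem_Ico, Fin.le_def, Fin.lt_def]; omega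
      exact (ih _ (by omega)).trans (H _ hmem hm)
  exact h.not_ge (key b hab b.isLt le_rfl)

theorem Fin.lt_iff_exists_succ_lt_of_antitone {α : Type*} [LinearOrder α] {n : ℕ} {f : Fin n → α}
    (hf : Antitone f) {a b : Fin n} (hab : a ≤ b) :
    f b < f a ↔ ∃ k ∈ Ico a b, ∃ hk : (k : ℕ) + 1 < n, f ⟨k + 1, hk⟩ < f k := by
  refine ⟨Fin.exists_succ_lt_of_lt hab, ?_⟩
  rintro ⟨k, hk, hk1, hlt⟩
  obtain ⟨hak, hkb⟩ := mem_Ico.1 hk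
  calc f b ≤ f ⟨k + 1, hk1⟩ := hf (Nat.succ_le_of_lt hkb)
    _ < f k := hlt
    _ ≤ f a := hf hak

theorem Finset.sum_Ici_eq_sum_Ico_add_sum_Ici {ι M : Type*} [LinearOrder ι] [LocallyFiniteOrder ι]
    [LocallyFiniteOrderTop ι] [AddCommMonoid M] (f : ι → M) {a b : ι} (hab : a ≤ b) :
    ∑ k ∈ Ici a, f k = ∑ k ∈ Ico a b, f k + ∑ k ∈ Ici b, f k := by
  have hunion : Ico a b ∪ Ici b = Ici a := by
    rw [← coe_inj]; push_cast; exact Set.Ico_union_Ici_eq_Ici hab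
  rw [← hunion, sum_union (disjoint_left.2 fun k hk hk' ↦ (mem_Ico.1 hk).2.not_ge (mem_Ici.1 hk'))]

theorem le_iff_le_of_antitone_of_lt_iff_lt {ι α β : Type*} [LinearOrder ι] [LinearOrder α]
    [LinearOrder β] {f : ι → α} {g : ι → β} (hf : Antitone f) (hg : Antitone g)
    (h : ∀ a b, a ≤ b → (f b < f a ↔ g b < g a)) (a b : ι) : f b ≤ f a ↔ g b ≤ g a := by
  rcases le_total a b with hab | hba
  · exact iff_of_true (hf hab) (hg hab)
  · simpa only [not_lt] using (h b a hba).not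

section TailSums

variable {α M : Type*} [LinearOrder α] [AddCommMonoid M] [LinearOrder M]
  [IsOrderedCancelAddMonoid M] {n : ℕ} {q : Fin n → α} {w : Fin n → M}

theorem antitone_sum_Ici (hw : ∀ k : Fin n, (k : ℕ) + 1 < n → 0 ≤ w k) :
    Antitone fun a ↦ ∑ k ∈ Ici a, w k := by
  intro a b hab
  dsimp only
  rw [sum_Ici_eq_sum_Ico_add_sum_Ici w hab]
  exact le_add_of_nonneg_left <| sum_nonneg fun k hk ↦
    hw k (Fin.val_add_one_lt_of_lt (mem_Ico.1 hk).2)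

theorem sum_Ici_lt_sum_Ici_iff (hq : Antitone q) (hw : ∀ k : Fin n, (k : ℕ) + 1 < n → 0 ≤ w k)
    (hw_pos : ∀ (k : Fin n) (hk : (k : ℕ) + 1 < n), 0 < w k ↔ q ⟨k + 1, hk⟩ < q k)
    {a b : Fin n} (hab : a ≤ b) :
    ∑ k ∈ Ici b, w k < ∑ k ∈ Ici a, w k ↔ q b < q a := by
  have hsucc {k} (hk : k ∈ Ico a b) : (k : ℕ) + 1 < n := Fin.val_add_one_lt_of_lt (mem_Ico.1 hk).2
  rw [sum_Ici_eq_sum_Ico_add_sum_Ici w hab, lt_add_iff_pos_left,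
    sum_pos_iff_of_nonneg fun k hk ↦ hw k (hsucc hk), Fin.lt_iff_exists_succ_lt_of_antitone hq hab]
  exact exists_congr fun k ↦ and_congr_right fun hk ↦
    (hw_pos k (hsucc hk)).trans ⟨fun h ↦ ⟨hsucc hk, h⟩, fun ⟨_, h⟩ ↦ h⟩

end TailSums

theorem orderPreserving_of_upper_triangular_weights_general (n : ℕ)
    (p : Fin n → ℝ) (σ : Equiv.Perm (Fin n))
    (hsort : ∀ k k' : Fin n, k ≤ k' → p (σ k') ≤ p (σ k))
    (w : Fin n → ℝ)
    (hw0 : ∀ (i : Fin n) (h : (i : ℕ) + 1 < n),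
      p (σ i) = p (σ ⟨(i : ℕ) + 1, h⟩) → w i = 0)
    (hwpos : ∀ (i : Fin n) (h : (i : ℕ) + 1 < n),
      p (σ ⟨(i : ℕ) + 1, h⟩) < p (σ i) → 0 < w i)
    (g : Fin n → ℝ)
    (hg : ∀ j : Fin n, g j = ∑ k ∈ Finset.Ici (σ.symm j), w k) :
    ∀ i j : Fin n, p j ≤ p i ↔ g j ≤ g i := by
  have hq : Antitone (p ∘ σ) := hsort
  have hstep (k : Fin n) (hk : (k : ℕ) + 1 < n) : p (σ ⟨k + 1, hk⟩) ≤ p (σ k) :=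
    hq (Nat.le_succ k)
  have hw (k : Fin n) (hk : (k : ℕ) + 1 < n) : 0 ≤ w k :=
    (hstep k hk).eq_or_lt.elim (fun he ↦ (hw0 k hk he.symm).ge) fun hlt ↦ (hwpos k hk hlt).le
  have hw_pos (k : Fin n) (hk : (k : ℕ) + 1 < n) : 0 < w k ↔ p (σ ⟨k + 1, hk⟩) < p (σ k) :=
    ⟨fun h ↦ (hstep k hk).lt_of_ne fun he ↦ h.ne' (hw0 k hk he.symm), hwpos k hk⟩
  intro i j
  obtain ⟨a, rfl⟩ := σ.surjective i
  obtain ⟨b, rfl⟩ := σ.surjective j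
  simp only [hg, Equiv.symm_apply_apply]
  exact le_iff_le_of_antitone_of_lt_iff_lt hq (antitone_sum_Ici hw)
    (fun a b hab ↦ (sum_Ici_lt_sum_Ici_iff hq hw hw_pos hab).symm) a b

/-- Sufficiency of the order-preserving calibrator construction of Rahimi et al.:
if `σ` sorts `p` in nonincreasing order and the weights `w` vanish exactly on ties and are
positive on strict descents, then `g j = Σ_{k ≥ σ⁻¹ j} w k` (i.e. `g = S(p)⁻¹ U w`) is
order-preserving for `p`. -/
theorem orderPreserving_of_upper_triangular_weights (n : ℕ) (hn : 1 ≤ n)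
    (p : Fin n → ℝ) (σ : Equiv.Perm (Fin n))
    (hsort : ∀ k k' : Fin n, k ≤ k' → p (σ k') ≤ p (σ k))
    (w : Fin n → ℝ)
    (hw0 : ∀ (i : Fin n) (h : (i : ℕ) + 1 < n),
      p (σ i) = p (σ ⟨(i : ℕ) + 1, h⟩) → w i = 0)
    (hwpos : ∀ (i : Fin n) (h : (i : ℕ) + 1 < n),
      p (σ ⟨(i : ℕ) + 1, h⟩) < p (σ i) → 0 < w i)
    (g : Fin n → ℝ)
    (hg : ∀ j : Fin n, g j = ∑ k ∈ Finset.Ici (σ.symm j), w k) :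
    ∀ i j : Fin n, p j ≤ p i ↔ g j ≤ g i :=
  orderPreserving_of_upper_triangular_weights_general n p σ hsort w hw0 hwpos g hg
end
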